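/- arXiv:2511.01033 — 2 statements merged into one kernel-verified Lean document; each statement's English description precedes it below -/
import Mathlib

section
/- There exist a constant C > 0 and an integer N₀ such that for every integer N ≥ N₀ and all real numbers α, β, γ with 0 ≤ α ≤ 1/2, 0 ≤ β ≤ 1/2, and 0 ≤ γ ≤ 1/2, one has |∂L_N/∂α (α, β, γ)| ≤ C/N² and |∂L_N/∂β (α, β, γ)| ≤ C/N². -/
/-!
`L_N` depends on `α` and `β` only through `s`, so both partial derivatives factor as
`(∂s/∂·) · ∂ℓ/∂s`, where `ℓ(s) = γ²(s² + M)/(s + M)² − 2γs/(s + M) + 1` and `M = 2N − 1`.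
For `0 ≤ α, β ≤ 1/2` one has `s, e^α ∈ [1, 2]`, so `∂s/∂α` and `∂s/∂β` are `O(1/M)` because
`G = e^α + 2N − 2 ≥ M`, while `∂ℓ/∂s` is a difference of two nonnegative terms each at most
`1/M`. Hence both partial derivatives are `O(1/M²) = O(1/N²)`.
-/

noncomputable section

/-- `s = exp(β·e^α / (e^α + 2N − 2))`. -/
def sFun (N : ℕ) (α β : ℝ) : ℝ :=
  Real.exp (β * Real.exp α / (Real.exp α + 2 * (N : ℝ) - 2))

/-- `r = s + 2N − 1`. -/
def rFun (N : ℕ) (α β : ℝ) : ℝ := sFun N α β + 2 * (N : ℝ) - 1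

/-- The loss `L_N(α, β, γ) = γ²·(s² + 2N − 1)/r² − 2γ·s/r + 1`. -/
def Lfun (N : ℕ) (α β γ : ℝ) : ℝ :=
  γ ^ 2 * ((sFun N α β) ^ 2 + (2 * (N : ℝ) - 1)) / (rFun N α β) ^ 2 -
    2 * γ * sFun N α β / rFun N α β + 1

/-- The partial derivative `∂L_N/∂α`. -/
def dLalpha (N : ℕ) (α β γ : ℝ) : ℝ := deriv (fun x => Lfun N x β γ) α

/-- The partial derivative `∂L_N/∂β`. -/
def dLbeta (N : ℕ) (α β γ : ℝ) : ℝ := deriv (fun x => Lfun N α x γ) β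

/-- The partial derivative `∂L_N/∂γ`. -/
def dLgamma (N : ℕ) (α β γ : ℝ) : ℝ := deriv (fun x => Lfun N α β x) γ

open Real

lemma exp_le_two_of_le_half {x : ℝ} (hx : x ≤ 1 / 2) : exp x ≤ 2 :=
  calc exp x ≤ exp (1 / 2) := exp_le_exp.2 hx
    _ ≤ 1 / (1 - 1 / 2) := exp_bound_div_one_sub_of_interval (by norm_num) (by norm_num)
    _ = 2 := by norm_num

def lossOf (M γ s : ℝ) : ℝ := γ ^ 2 * (s ^ 2 + M) / (s + M) ^ 2 - 2 * γ * s / (s + M) + 1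

def lossDeriv (M γ s : ℝ) : ℝ :=
  2 * γ ^ 2 * M * (s - 1) / (s + M) ^ 3 - 2 * γ * M / (s + M) ^ 2

lemma Lfun_eq_lossOf (N : ℕ) (α β γ : ℝ) :
    Lfun N α β γ = lossOf (2 * N - 1) γ (sFun N α β) := by
  simp only [Lfun, rFun, lossOf, add_sub_assoc]

lemma hasDerivAt_lossOf (M γ : ℝ) {s : ℝ} (hs : s + M ≠ 0) :
    HasDerivAt (lossOf M γ) (lossDeriv M γ s) s := by
  have hr : HasDerivAt (fun t => t + M) 1 s := (hasDerivAt_id s).add_const M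
  have hsq : HasDerivAt (fun t => γ ^ 2 * (t ^ 2 + M)) (γ ^ 2 * (2 * s)) s := by
    simpa using ((hasDerivAt_pow 2 s).add_const M).const_mul (γ ^ 2)
  have hlin : HasDerivAt (fun t => 2 * γ * t) (2 * γ) s := by
    simpa using (hasDerivAt_id s).const_mul (2 * γ)
  have h := ((hsq.div (hr.pow 2) (pow_ne_zero 2 hs)).sub (hlin.div hr hs)).add_const 1
  refine h.congr_deriv ?_
  simp only [lossDeriv, Pi.pow_apply]
  field_simp
  ring

lemma abs_lossDeriv_le {M γ s : ℝ} (hM : 0 < M) (hγ0 : 0 ≤ γ) (hγ1 : γ ≤ 1 / 2) (hs : 1 ≤ s) :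
    |lossDeriv M γ s| ≤ 1 / M := by
  have hr : M ≤ s + M := by linarith
  have hr2 : M ^ 2 ≤ (s + M) ^ 2 := pow_le_pow_left₀ hM.le hr 2
  refine abs_sub_le_of_nonneg_of_le (by positivity) ?_ (by positivity) ?_
  · rw [div_le_div_iff₀ (by positivity) hM]
    have hγ2 : 2 * γ ^ 2 ≤ 1 := by nlinarith
    have hcube : M ^ 2 * (s - 1) ≤ (s + M) ^ 3 := by
      nlinarith [mul_le_mul hr2 (show s - 1 ≤ s + M by linarith) (by linarith) (by positivity)]
    nlinarith [mul_le_mul_of_nonneg_right hγ2 (show 0 ≤ M ^ 2 * (s - 1) by nlinarith)]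
  · rw [div_le_div_iff₀ (by positivity) hM]
    nlinarith

section Exponent

variable (N : ℕ) (α β : ℝ)

lemma hasDerivAt_sFun_beta :
    HasDerivAt (fun x => sFun N α x) (sFun N α β * (exp α / (exp α + 2 * N - 2))) β := by
  have h : HasDerivAt (fun x => x * exp α / (exp α + 2 * N - 2))
      (exp α / (exp α + 2 * N - 2)) β := by
    simpa [mul_div_assoc] using (hasDerivAt_id β).mul_const (exp α / (exp α + 2 * N - 2))
  exact h.exp

variable {N}

lemma hasDerivAt_sFun_alpha (hN : 1 ≤ N) :
    HasDerivAt (fun x => sFun N x β)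
      (sFun N α β * (β * exp α * (2 * N - 2) / (exp α + 2 * N - 2) ^ 2)) α := by
  have hG : exp α + 2 * N - 2 ≠ 0 := by
    have : (1 : ℝ) ≤ N := by exact_mod_cast hN
    linarith [exp_pos α]
  have h := ((hasDerivAt_exp α).const_mul β).div (((hasDerivAt_exp α).add_const _).sub_const 2) hG
  refine (h.congr_deriv ?_).exp
  field_simp
  ring

lemma one_le_sFun (hN : 1 ≤ N) (hβ : 0 ≤ β) : 1 ≤ sFun N α β := by
  have : (1 : ℝ) ≤ N := by exact_mod_cast hN
  exact one_le_exp (div_nonneg (mul_nonneg hβ (exp_pos α).le) (by linarith [exp_pos α]))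

lemma sFun_le_two (hN : 1 ≤ N) (hβ0 : 0 ≤ β) (hβ1 : β ≤ 1 / 2) : sFun N α β ≤ 2 := by
  have : (1 : ℝ) ≤ N := by exact_mod_cast hN
  refine exp_le_two_of_le_half (le_trans ?_ hβ1)
  rw [div_le_iff₀ (by linarith [exp_pos α])]
  nlinarith [exp_pos α]

lemma abs_deriv_sFun_alpha_le (hN : 1 ≤ N) (hα0 : 0 ≤ α) (hα1 : α ≤ 1 / 2) (hβ0 : 0 ≤ β)
    (hβ1 : β ≤ 1 / 2) :
    |sFun N α β * (β * exp α * (2 * N - 2) / (exp α + 2 * N - 2) ^ 2)| ≤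
      2 / (2 * (N : ℝ) - 1) := by
  have hN' : (1 : ℝ) ≤ N := by exact_mod_cast hN
  have hs := sFun_le_two α β hN hβ0 hβ1
  have hA := exp_le_two_of_le_half hα1
  have hG : 2 * (N : ℝ) - 1 ≤ exp α + 2 * N - 2 := by linarith [one_le_exp hα0]
  have hβA : β * exp α ≤ 1 := by nlinarith
  have hfrac : β * exp α * (2 * N - 2) / (exp α + 2 * N - 2) ^ 2 ≤ 1 / (2 * N - 1) := by
    rw [div_le_div_iff₀ (by nlinarith) (by linarith)]
    nlinarith [mul_le_mul hG hG (by linarith) (by linarith), mul_nonneg hβ0 (exp_pos α).le,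
      mul_le_mul_of_nonneg_right hβA (show 0 ≤ (2 * (N : ℝ) - 2) * (2 * N - 1) by nlinarith)]
  have hfrac0 : 0 ≤ β * exp α * (2 * N - 2) / (exp α + 2 * N - 2) ^ 2 :=
    div_nonneg (mul_nonneg (mul_nonneg hβ0 (exp_pos α).le) (by linarith)) (sq_nonneg _)
  rw [abs_of_nonneg (mul_nonneg (zero_le_one.trans (one_le_sFun α β hN hβ0)) hfrac0)]
  calc _ ≤ 2 * (1 / (2 * (N : ℝ) - 1)) := mul_le_mul hs hfrac hfrac0 (by norm_num)
    _ = 2 / (2 * N - 1) := by ring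

lemma abs_deriv_sFun_beta_le (hN : 1 ≤ N) (hα0 : 0 ≤ α) (hα1 : α ≤ 1 / 2) (hβ0 : 0 ≤ β)
    (hβ1 : β ≤ 1 / 2) :
    |sFun N α β * (exp α / (exp α + 2 * N - 2))| ≤ 4 / (2 * (N : ℝ) - 1) := by
  have hN' : (1 : ℝ) ≤ N := by exact_mod_cast hN
  have hG : 2 * (N : ℝ) - 1 ≤ exp α + 2 * N - 2 := by linarith [one_le_exp hα0]
  have hfrac : exp α / (exp α + 2 * N - 2) ≤ 2 / (2 * N - 1) :=
    div_le_div₀ (by norm_num) (exp_le_two_of_le_half hα1) (by linarith) hG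
  have hfrac0 : 0 ≤ exp α / (exp α + 2 * N - 2) := div_nonneg (exp_pos α).le (by linarith)
  rw [abs_of_nonneg (mul_nonneg (zero_le_one.trans (one_le_sFun α β hN hβ0)) hfrac0)]
  calc _ ≤ 2 * (2 / (2 * (N : ℝ) - 1)) :=
        mul_le_mul (sFun_le_two α β hN hβ0 hβ1) hfrac hfrac0 (by norm_num)
    _ = 4 / (2 * N - 1) := by ring

end Exponent

lemma abs_deriv_lossOf_comp_le {f : ℝ → ℝ} {f' x M γ C : ℝ} (hf : HasDerivAt f f' x)
    (hM : 0 < M) (hγ0 : 0 ≤ γ) (hγ1 : γ ≤ 1 / 2) (hfx : 1 ≤ f x) (hf' : |f'| ≤ C / M) :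
    |deriv (fun t => lossOf M γ (f t)) x| ≤ C / M ^ 2 := by
  have h : HasDerivAt (fun t => lossOf M γ (f t)) (lossDeriv M γ (f x) * f') x :=
    (hasDerivAt_lossOf M γ (by linarith)).comp x hf
  rw [h.deriv, abs_mul]
  calc _ ≤ 1 / M * (C / M) :=
        mul_le_mul (abs_lossDeriv_le hM hγ0 hγ1 hfx) hf' (abs_nonneg _) (by positivity)
    _ = C / M ^ 2 := by ring

/-- For all sufficiently large `N`, in the regime `0 ≤ α, β, γ ≤ 1/2`,
`|∂L_N/∂α| ≤ C/N²` and `|∂L_N/∂β| ≤ C/N²`. -/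
theorem stmt14 :
    ∃ C : ℝ, 0 < C ∧ ∃ N₀ : ℕ, ∀ N : ℕ, N₀ ≤ N → ∀ α β γ : ℝ,
      0 ≤ α → α ≤ 1 / 2 → 0 ≤ β → β ≤ 1 / 2 → 0 ≤ γ → γ ≤ 1 / 2 →
        |dLalpha N α β γ| ≤ C / (N : ℝ) ^ 2 ∧ |dLbeta N α β γ| ≤ C / (N : ℝ) ^ 2 := by
  refine ⟨4, by norm_num, 1, fun N hN α β γ hα0 hα1 hβ0 hβ1 hγ0 hγ1 => ?_⟩
  have hN' : (1 : ℝ) ≤ N := by exact_mod_cast hN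
  have hM : (0 : ℝ) < 2 * N - 1 := by linarith
  have hMN : 4 / (2 * (N : ℝ) - 1) ^ 2 ≤ 4 / (N : ℝ) ^ 2 := by gcongr; linarith
  have hs := one_le_sFun α β hN hβ0
  simp only [dLalpha, dLbeta, Lfun_eq_lossOf]
  constructor
  · have hα := (abs_deriv_sFun_alpha_le α β hN hα0 hα1 hβ0 hβ1).trans
      (div_le_div_of_nonneg_right (by norm_num : (2 : ℝ) ≤ 4) hM.le)
    exact (abs_deriv_lossOf_comp_le (hasDerivAt_sFun_alpha α β hN) hM hγ0 hγ1 hs hα).trans hMN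
  · exact (abs_deriv_lossOf_comp_le (hasDerivAt_sFun_beta N α β) hM hγ0 hγ1 hs
      (abs_deriv_sFun_beta_le α β hN hα0 hα1 hβ0 hβ1)).trans hMN
end
end

section
/- There exist constants c > 0, C > 0 and an integer N₀ such that for every integer N ≥ N₀ and every gradient-flow solution (α, β, γ) of L_N with zero initialization, the time until in-context learning t_ICL = inf{t ≥ 0 : α(t) ≥ 1/2 and β(t) ≥ 1/2 and γ(t) ≥ 1/2} is finite and satisfies c·N² ≤ t_ICL ≤ C·N²; that is, t_ICL = Θ(N²). -/
noncomputable section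

set_option maxHeartbeats 1000000

open Set Filter Real Topology

/-- If the derivative at `x` is negative, then just to the right of `x` the value is smaller. -/
lemma eventually_lt_right_of_deriv_neg {f : ℝ → ℝ} {x c : ℝ}
    (hf : HasDerivAt f c x) (hc : c < 0) : ∀ᶠ t in 𝓝[>] x, f t < f x := by
  have hs : Tendsto (slope f x) (𝓝[≠] x) (𝓝 c) := hasDerivAt_iff_tendsto_slope.mp hf
  have h1 : ∀ᶠ t in 𝓝[≠] x, slope f x t < 0 := hs.eventually_lt_const hc
  have h2 : ∀ᶠ t in 𝓝[>] x, slope f x t < 0 :=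
    h1.filter_mono (nhdsWithin_mono x fun t ht => ne_of_gt ht)
  filter_upwards [h2, self_mem_nhdsWithin] with t ht hx
  have hxt : (0:ℝ) < t - x := sub_pos.mpr hx
  have h3 : (f t - f x) / (t - x) < 0 := by
    simpa [slope_def_field] using ht
  have := (div_neg_iff).mp h3
  rcases this with ⟨_, h⟩ | ⟨h, _⟩
  · linarith
  · linarith

/-- Compound strict barrier lemma for a pair of functions with (possibly moving) upper
barriers. -/
lemma barrier_pair {f g F G φ ψ φ' ψ' : ℝ → ℝ} {T : ℝ}
    (hf : ∀ t ∈ Icc (0:ℝ) T, HasDerivAt f (F t) t)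
    (hg : ∀ t ∈ Icc (0:ℝ) T, HasDerivAt g (G t) t)
    (hφ : ∀ t ∈ Icc (0:ℝ) T, HasDerivAt φ (φ' t) t)
    (hψ : ∀ t ∈ Icc (0:ℝ) T, HasDerivAt ψ (ψ' t) t)
    (h0f : f 0 ≤ φ 0) (h0g : g 0 ≤ ψ 0)
    (hbf : ∀ t ∈ Icc (0:ℝ) T, f t = φ t → g t ≤ ψ t → F t < φ' t)
    (hbg : ∀ t ∈ Icc (0:ℝ) T, g t = ψ t → f t ≤ φ t → G t < ψ' t) :
    ∀ t ∈ Icc (0:ℝ) T, f t ≤ φ t ∧ g t ≤ ψ t := by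
  by_contra hcon
  push_neg at hcon
  obtain ⟨t₁, ht₁, hviol0⟩ := hcon
  have hviol : ¬(f t₁ ≤ φ t₁ ∧ g t₁ ≤ ψ t₁) := fun h => (not_lt.mpr h.2) (hviol0 h.1)
  set V : Set ℝ := {t | t ∈ Icc (0:ℝ) T ∧ ¬(f t ≤ φ t ∧ g t ≤ ψ t)} with hV
  have hVne : V.Nonempty := ⟨t₁, ht₁, hviol⟩
  have hVbdd : BddBelow V := ⟨0, fun t ht => ht.1.1⟩
  set τ := sInf V with hτ
  have hτ0 : 0 ≤ τ := le_csInf hVne fun t ht => ht.1.1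
  have hτT : τ ≤ T := le_trans (csInf_le hVbdd ⟨ht₁, hviol⟩) ht₁.2
  have hτIcc : τ ∈ Icc (0:ℝ) T := ⟨hτ0, hτT⟩
  -- before τ, everything holds
  have hgood : ∀ t ∈ Icc (0:ℝ) T, t < τ → f t ≤ φ t ∧ g t ≤ ψ t := by
    intro t ht htτ
    by_contra h
    exact absurd (csInf_le hVbdd ⟨ht, h⟩) (not_le.mpr htτ)
  -- at τ, the nonstrict inequalities hold
  have hkey : f τ ≤ φ τ ∧ g τ ≤ ψ τ := by
    rcases eq_or_lt_of_le hτ0 with h0 | h0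
    · constructor
      · exact h0 ▸ h0f
      · exact h0 ▸ h0g
    · -- limit from the left
      have hev : ∀ᶠ t in 𝓝[<] τ, f t ≤ φ t ∧ g t ≤ ψ t := by
        have hIoo : Ioo (0:ℝ) τ ∈ 𝓝[<] τ := Ioo_mem_nhdsLT_of_mem ⟨h0, le_refl τ⟩
        filter_upwards [hIoo] with t ht
        exact hgood t ⟨ht.1.le, le_trans ht.2.le hτT⟩ ht.2
      have hcf : ContinuousAt f τ := (hf τ hτIcc).continuousAt
      have hcg : ContinuousAt g τ := (hg τ hτIcc).continuousAt
      have hcφ : ContinuousAt φ τ := (hφ τ hτIcc).continuousAt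
      have hcψ : ContinuousAt ψ τ := (hψ τ hτIcc).continuousAt
      constructor
      · exact le_of_tendsto_of_tendsto
          (hcf.continuousWithinAt : Tendsto f (𝓝[<] τ) (𝓝 (f τ)))
          (hcφ.continuousWithinAt : Tendsto φ (𝓝[<] τ) (𝓝 (φ τ)))
          (hev.mono fun t h => h.1)
      · exact le_of_tendsto_of_tendsto
          (hcg.continuousWithinAt : Tendsto g (𝓝[<] τ) (𝓝 (g τ)))
          (hcψ.continuousWithinAt : Tendsto ψ (𝓝[<] τ) (𝓝 (ψ τ)))
          (hev.mono fun t h => h.2)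
  have hτnV : τ ∉ V := fun h => h.2 hkey
  -- violations cluster to the right of τ
  have hfreq : ∃ᶠ t in 𝓝[>] τ, t ∈ V := by
    rw [frequently_iff]
    intro U hU
    obtain ⟨u, hu, hsub⟩ := mem_nhdsGT_iff_exists_Ioo_subset.mp hU
    have : sInf V < u := lt_of_le_of_lt (le_refl τ) hu
    obtain ⟨v, hvV, hvu⟩ := (csInf_lt_iff hVbdd hVne).mp this
    have hτv : τ ≤ v := csInf_le hVbdd hvV
    have : v ∈ Ioo τ u := ⟨lt_of_le_of_ne hτv (fun h => hτnV (h ▸ hvV)), hvu⟩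
    exact ⟨v, hsub this, hvV⟩
  -- but just right of τ there is no violation
  have hevf : ∀ᶠ t in 𝓝[>] τ, f t < φ t := by
    rcases eq_or_lt_of_le hkey.1 with heq | hlt
    · have hFlt : F τ - φ' τ < 0 := sub_neg.mpr (hbf τ hτIcc heq hkey.2)
      have hd : HasDerivAt (fun t => f t - φ t) (F τ - φ' τ) τ := (hf τ hτIcc).sub (hφ τ hτIcc)
      have := eventually_lt_right_of_deriv_neg hd hFlt
      filter_upwards [this] with t ht
      have : f t - φ t < f τ - φ τ := ht
      linarith [heq]
    · have hc : ContinuousAt (fun t => φ t - f t) τ :=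
        ((hφ τ hτIcc).continuousAt).sub ((hf τ hτIcc).continuousAt)
      have hpos : (0:ℝ) < φ τ - f τ := sub_pos.mpr hlt
      have hev : ∀ᶠ t in 𝓝 τ, (fun t => φ t - f t) t ∈ Ioi (0:ℝ) :=
        hc.eventually_mem (Ioi_mem_nhds hpos)
      have := hev.filter_mono (nhdsWithin_le_nhds : 𝓝[>] τ ≤ 𝓝 τ)
      filter_upwards [this] with t ht
      exact sub_pos.mp ht
  have hevg : ∀ᶠ t in 𝓝[>] τ, g t < ψ t := by
    rcases eq_or_lt_of_le hkey.2 with heq | hlt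
    · have hGlt : G τ - ψ' τ < 0 := sub_neg.mpr (hbg τ hτIcc heq hkey.1)
      have hd : HasDerivAt (fun t => g t - ψ t) (G τ - ψ' τ) τ := (hg τ hτIcc).sub (hψ τ hτIcc)
      have := eventually_lt_right_of_deriv_neg hd hGlt
      filter_upwards [this] with t ht
      have : g t - ψ t < g τ - ψ τ := ht
      linarith [heq]
    · have hc : ContinuousAt (fun t => ψ t - g t) τ :=
        ((hψ τ hτIcc).continuousAt).sub ((hg τ hτIcc).continuousAt)
      have hpos : (0:ℝ) < ψ τ - g τ := sub_pos.mpr hlt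
      have hev : ∀ᶠ t in 𝓝 τ, (fun t => ψ t - g t) t ∈ Ioi (0:ℝ) :=
        hc.eventually_mem (Ioi_mem_nhds hpos)
      have := hev.filter_mono (nhdsWithin_le_nhds : 𝓝[>] τ ≤ 𝓝 τ)
      filter_upwards [this] with t ht
      exact sub_pos.mp ht
  have : ∀ᶠ t in 𝓝[>] τ, t ∉ V := by
    filter_upwards [hevf, hevg] with t h1 h2
    exact fun hv => hv.2 ⟨h1.le, h2.le⟩
  exact (hfreq.and_eventually this).exists.elim fun t ht => ht.2 ht.1

/-- Monotonicity from pointwise derivatives. -/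
lemma monoOn_of_hasDerivAt {f F : ℝ → ℝ} {a b : ℝ}
    (hf : ∀ t ∈ Icc a b, HasDerivAt f (F t) t)
    (hF : ∀ t ∈ Icc a b, 0 ≤ F t) : MonotoneOn f (Icc a b) := by
  rcases le_or_gt a b with hab | hab
  · apply monotoneOn_of_deriv_nonneg (convex_Icc a b)
    · exact fun t ht => (hf t ht).continuousAt.continuousWithinAt
    · intro t ht
      rw [interior_Icc] at ht
      exact (hf t ⟨ht.1.le, ht.2.le⟩).differentiableAt.differentiableWithinAt
    · intro t ht
      rw [interior_Icc] at ht
      rw [(hf t ⟨ht.1.le, ht.2.le⟩).deriv]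
      exact hF t ⟨ht.1.le, ht.2.le⟩
  · intro x hx y hy _
    exact absurd (hx.1.trans hx.2) (not_le.mpr hab)

/-- Growth bound from a lower bound on the derivative. -/
lemma growth_of_hasDerivAt {f F : ℝ → ℝ} {a b m : ℝ} (hab : a ≤ b)
    (hf : ∀ t ∈ Icc a b, HasDerivAt f (F t) t)
    (hF : ∀ t ∈ Icc a b, m ≤ F t) : f a + m * (b - a) ≤ f b := by
  have h := monoOn_of_hasDerivAt (f := fun t => f t - m * t) (F := fun t => F t - m)
    (fun t ht => ((hf t ht).sub (((hasDerivAt_id t).const_mul m).congr_deriv (by ring))))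
    (fun t ht => sub_nonneg.mpr (hF t ht))
  have := h (left_mem_Icc.mpr hab) (right_mem_Icc.mpr hab) hab
  simp only at this
  linarith

/-- Decay bound from an upper bound on the derivative. -/
lemma decay_of_hasDerivAt {f F : ℝ → ℝ} {a b m : ℝ} (hab : a ≤ b)
    (hf : ∀ t ∈ Icc a b, HasDerivAt f (F t) t)
    (hF : ∀ t ∈ Icc a b, F t ≤ m) : f b ≤ f a + m * (b - a) := by
  have h := growth_of_hasDerivAt (f := fun t => -f t) (F := fun t => -F t) hab
    (fun t ht => (hf t ht).neg) (fun t ht => neg_le_neg (hF t ht))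
  linarith


/-- `∂L/∂s` as a function of `σ`. -/
def dLs (N : ℕ) (σ γ : ℝ) : ℝ :=
  2 * γ ^ 2 * (2 * (N : ℝ) - 1) * (σ - 1) / (σ + (2 * (N : ℝ) - 1)) ^ 3 -
    2 * γ * (2 * (N : ℝ) - 1) / (σ + (2 * (N : ℝ) - 1)) ^ 2

lemma hasDerivAt_Louter (N : ℕ) (γ σ : ℝ) (hσ : 0 < σ + (2 * (N : ℝ) - 1)) :
    HasDerivAt (fun x : ℝ => γ ^ 2 * (x ^ 2 + (2 * (N : ℝ) - 1)) / (x + (2 * (N : ℝ) - 1)) ^ 2 -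
      2 * γ * x / (x + (2 * (N : ℝ) - 1)) + 1) (dLs N σ γ) σ := by
  set M : ℝ := 2 * (N : ℝ) - 1 with hM
  have hne : σ + M ≠ 0 := ne_of_gt hσ
  have hne2 : (σ + M) ^ 2 ≠ 0 := pow_ne_zero 2 hne
  have h1 : HasDerivAt (fun x : ℝ => γ ^ 2 * (x ^ 2 + M)) (γ ^ 2 * (2 * σ)) σ := by
    have := ((hasDerivAt_pow 2 σ).add_const M).const_mul (γ ^ 2)
    simpa using this
  have h2 : HasDerivAt (fun x : ℝ => (x + M) ^ 2) (2 * (σ + M)) σ := by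
    have := ((hasDerivAt_id σ).add_const M).pow 2
    simpa [Pi.pow_def] using this
  have hdiv1 := h1.div h2 hne2
  have h3 : HasDerivAt (fun x : ℝ => 2 * γ * x) (2 * γ) σ := by
    simpa using (hasDerivAt_id σ).const_mul (2 * γ)
  have h4 : HasDerivAt (fun x : ℝ => x + M) 1 σ := (hasDerivAt_id σ).add_const M
  have hdiv2 := h3.div h4 hne
  have htot := (hdiv1.sub hdiv2).add_const 1
  refine htot.congr_deriv ?_
  rw [dLs, ← hM]
  field_simp
  ring

/-- Flow field for `γ`. -/
def gflow (N : ℕ) (α β γ : ℝ) : ℝ :=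
  2 * sFun N α β / rFun N α β -
    2 * γ * ((sFun N α β) ^ 2 + (2 * (N : ℝ) - 1)) / (rFun N α β) ^ 2

/-- Flow field for `β`. -/
def bflow (N : ℕ) (α β γ : ℝ) : ℝ :=
  2 * sFun N α β * (Real.exp α / (Real.exp α + 2 * (N : ℝ) - 2)) * γ * (2 * (N : ℝ) - 1) *
    (rFun N α β - γ * (sFun N α β - 1)) / (rFun N α β) ^ 3

/-- Flow field for `α`. -/
def aflow (N : ℕ) (α β γ : ℝ) : ℝ :=
  2 * sFun N α β * β *
      (Real.exp α * (2 * (N : ℝ) - 2) / (Real.exp α + 2 * (N : ℝ) - 2) ^ 2) * γ *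
      (2 * (N : ℝ) - 1) * (rFun N α β - γ * (sFun N α β - 1)) / (rFun N α β) ^ 3

lemma sFun_pos (N : ℕ) (α β : ℝ) : 0 < sFun N α β := Real.exp_pos _

lemma rFun_pos {N : ℕ} (hN : 1 ≤ N) (α β : ℝ) : 0 < rFun N α β := by
  have h1 : (1 : ℝ) ≤ (N : ℝ) := by exact_mod_cast hN
  have := sFun_pos N α β
  rw [rFun]; nlinarith

lemma denom_pos {N : ℕ} (hN : 1 ≤ N) (α : ℝ) : 0 < Real.exp α + 2 * (N : ℝ) - 2 := by
  have h1 : (1 : ℝ) ≤ (N : ℝ) := by exact_mod_cast hN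
  have := Real.exp_pos α
  nlinarith

lemma neg_dLgamma_eq (N : ℕ) (α β γ : ℝ) : -dLgamma N α β γ = gflow N α β γ := by
  have h : HasDerivAt (fun x : ℝ => Lfun N α β x)
      (2 * γ * ((sFun N α β) ^ 2 + (2 * (N : ℝ) - 1)) / (rFun N α β) ^ 2 -
        2 * sFun N α β / rFun N α β) γ := by
    have h1 : HasDerivAt (fun x : ℝ => x ^ 2 * (((sFun N α β) ^ 2 + (2 * (N : ℝ) - 1)) / (rFun N α β) ^ 2))
        (2 * γ * (((sFun N α β) ^ 2 + (2 * (N : ℝ) - 1)) / (rFun N α β) ^ 2)) γ := by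
      have := (hasDerivAt_pow 2 γ).mul_const (((sFun N α β) ^ 2 + (2 * (N : ℝ) - 1)) / (rFun N α β) ^ 2)
      simpa [mul_comm] using this
    have h2 : HasDerivAt (fun x : ℝ => x * (2 * sFun N α β / rFun N α β))
        (2 * sFun N α β / rFun N α β) γ := by
      simpa using (hasDerivAt_id γ).mul_const (2 * sFun N α β / rFun N α β)
    have h3 := (h1.sub h2).add_const 1
    have heq : (fun x : ℝ => x ^ 2 * (((sFun N α β) ^ 2 + (2 * (N : ℝ) - 1)) / (rFun N α β) ^ 2) -
        x * (2 * sFun N α β / rFun N α β) + 1) = fun x : ℝ => Lfun N α β x := by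
      funext x
      rw [Lfun]
      ring
    simp only [Pi.sub_apply] at h3
    rw [heq] at h3
    refine h3.congr_deriv ?_
    ring
  rw [dLgamma, h.deriv, gflow]
  ring

lemma neg_dLbeta_eq {N : ℕ} (hN : 1 ≤ N) (α β γ : ℝ) :
    -dLbeta N α β γ = bflow N α β γ := by
  set E : ℝ := Real.exp α with hE
  have hED : 0 < E + 2 * (N : ℝ) - 2 := denom_pos hN α
  have hr : 0 < sFun N α β + (2 * (N : ℝ) - 1) := by
    have := rFun_pos hN α β
    rw [rFun] at this
    linarith
  have hi : HasDerivAt (fun x : ℝ => x * E / (E + 2 * (N : ℝ) - 2))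
      (E / (E + 2 * (N : ℝ) - 2)) β := by
    have := (hasDerivAt_id β).mul_const (E / (E + 2 * (N : ℝ) - 2))
    simpa [mul_div_assoc] using this
  have hs : HasDerivAt (fun x : ℝ => sFun N α x)
      (sFun N α β * (E / (E + 2 * (N : ℝ) - 2))) β := by
    simpa [sFun] using hi.exp
  have houter := hasDerivAt_Louter N γ (sFun N α β) hr
  have hcomp := houter.comp β hs
  have heq : ((fun x : ℝ => γ ^ 2 * (x ^ 2 + (2 * (N : ℝ) - 1)) / (x + (2 * (N : ℝ) - 1)) ^ 2 -
      2 * γ * x / (x + (2 * (N : ℝ) - 1)) + 1) ∘ (fun x : ℝ => sFun N α x)) =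
      fun x : ℝ => Lfun N α x γ := by
    funext x
    simp only [Function.comp, Lfun, rFun]
    ring
  rw [heq] at hcomp
  rw [dLbeta, hcomp.deriv, bflow, dLs, rFun]
  rw [← hE]
  have hne : sFun N α β + (2 * (N : ℝ) - 1) ≠ 0 := ne_of_gt hr
  have hne' : sFun N α β + 2 * (N : ℝ) - 1 ≠ 0 := by intro h; apply hne; linarith
  have hne2 : E + 2 * (N : ℝ) - 2 ≠ 0 := ne_of_gt hED
  field_simp [hne, hne', hne2]
  ring

lemma neg_dLalpha_eq {N : ℕ} (hN : 1 ≤ N) (α β γ : ℝ) :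
    -dLalpha N α β γ = aflow N α β γ := by
  have hr : 0 < sFun N α β + (2 * (N : ℝ) - 1) := by
    have := rFun_pos hN α β
    rw [rFun] at this
    linarith
  have hEDx : ∀ x : ℝ, 0 < Real.exp x + 2 * (N : ℝ) - 2 := fun x => denom_pos hN x
  have hi : HasDerivAt (fun x : ℝ => β * Real.exp x / (Real.exp x + 2 * (N : ℝ) - 2))
      (β * Real.exp α * (2 * (N : ℝ) - 2) / (Real.exp α + 2 * (N : ℝ) - 2) ^ 2) α := by
    have hnum : HasDerivAt (fun x : ℝ => β * Real.exp x) (β * Real.exp α) α :=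
      (Real.hasDerivAt_exp α).const_mul β
    have hden : HasDerivAt (fun x : ℝ => Real.exp x + 2 * (N : ℝ) - 2) (Real.exp α) α := by
      simpa using ((Real.hasDerivAt_exp α).add_const (2 * (N : ℝ))).sub_const 2
    have := hnum.div hden (ne_of_gt (hEDx α))
    refine this.congr_deriv ?_
    field_simp [(hEDx α).ne']
    ring
  have hs : HasDerivAt (fun x : ℝ => sFun N x β)
      (sFun N α β * (β * Real.exp α * (2 * (N : ℝ) - 2) / (Real.exp α + 2 * (N : ℝ) - 2) ^ 2)) α := by
    simpa [sFun] using hi.exp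
  have houter := hasDerivAt_Louter N γ (sFun N α β) hr
  have hcomp := houter.comp α hs
  have heq : ((fun x : ℝ => γ ^ 2 * (x ^ 2 + (2 * (N : ℝ) - 1)) / (x + (2 * (N : ℝ) - 1)) ^ 2 -
      2 * γ * x / (x + (2 * (N : ℝ) - 1)) + 1) ∘ (fun x : ℝ => sFun N x β)) =
      fun x : ℝ => Lfun N x β γ := by
    funext x
    simp only [Function.comp, Lfun, rFun]
    ring
  rw [heq] at hcomp
  rw [dLalpha, hcomp.deriv, aflow, dLs, rFun]
  have hne : sFun N α β + (2 * (N : ℝ) - 1) ≠ 0 := ne_of_gt hr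
  have hne' : sFun N α β + 2 * (N : ℝ) - 1 ≠ 0 := by intro h; apply hne; linarith
  have hne2 : Real.exp α + 2 * (N : ℝ) - 2 ≠ 0 := ne_of_gt (hEDx α)
  field_simp [hne, hne', hne2]
  ring


lemma exp_le_two_of_le {x : ℝ} (hx : x ≤ 0.69) : Real.exp x ≤ 2 := by
  have h : x ≤ Real.log 2 := le_trans hx (by linarith [Real.log_two_gt_d9])
  calc Real.exp x ≤ Real.exp (Real.log 2) := Real.exp_le_exp.mpr h
    _ = 2 := Real.exp_log two_pos

/-- Collected scalar bounds in the invariant region. -/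
lemma region_facts {N : ℕ} (hn : (1000000:ℝ) ≤ (N:ℝ)) {α β : ℝ}
    (hα1 : α ≤ 3/5) (hβ0 : 0 ≤ β) (hβ1 : β ≤ 9000) :
    1 ≤ sFun N α β ∧ sFun N α β ≤ 2 ∧
    Real.exp α / (Real.exp α + 2 * (N : ℝ) - 2) ≤ 1 / (N : ℝ) ∧
    0 < Real.exp α / (Real.exp α + 2 * (N : ℝ) - 2) := by
  set n : ℝ := (N : ℝ) with hndef
  have hn2 : (2:ℝ) ≤ n := by linarith
  have hN1 : 1 ≤ N := by
    have h : (1:ℝ) ≤ (N:ℝ) := by rw [← hndef]; linarith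
    exact_mod_cast h
  have hE2 : Real.exp α ≤ 2 := exp_le_two_of_le (by linarith)
  have hE0 : 0 < Real.exp α := Real.exp_pos α
  have hden : 0 < Real.exp α + 2 * n - 2 := denom_pos hN1 α
  have hu1 : Real.exp α / (Real.exp α + 2 * n - 2) ≤ 1 / n := by
    rw [div_le_div_iff₀ hden (by linarith : (0:ℝ) < n)]
    nlinarith
  have hu0 : 0 < Real.exp α / (Real.exp α + 2 * n - 2) := div_pos hE0 hden
  have hx0 : 0 ≤ β * Real.exp α / (Real.exp α + 2 * n - 2) := by
    rw [mul_div_assoc]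
    exact mul_nonneg hβ0 hu0.le
  have hx1 : β * Real.exp α / (Real.exp α + 2 * n - 2) ≤ 0.69 := by
    rw [mul_div_assoc]
    have h1 : β * (Real.exp α / (Real.exp α + 2 * n - 2)) ≤ 9000 * (1/n) := by
      apply mul_le_mul hβ1 hu1 hu0.le (by norm_num)
    have h2 : 9000 * (1/n) ≤ 9000 * (1/1000000) := by
      apply mul_le_mul_of_nonneg_left _ (by norm_num)
      rw [div_le_div_iff₀ (by linarith) (by norm_num)]
      linarith
    linarith
  refine ⟨?_, ?_, hu1, hu0⟩
  · rw [sFun]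
    exact Real.one_le_exp hx0
  · rw [sFun]
    exact exp_le_two_of_le hx1

lemma gflow_at_three {N : ℕ} (hn : (1000000:ℝ) ≤ (N:ℝ)) {α β : ℝ}
    (hα1 : α ≤ 3/5) (hβ0 : 0 ≤ β) (hβ1 : β ≤ 9000) :
    gflow N α β 3 < 0 := by
  set n : ℝ := (N : ℝ) with hndef
  obtain ⟨hs1, hs2, -, -⟩ := region_facts hn hα1 hβ0 hβ1
  set s : ℝ := sFun N α β with hsdef
  have hr : rFun N α β = s + 2 * n - 1 := rfl
  have hr0 : 0 < s + 2 * n - 1 := by nlinarith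
  have hflow : gflow N α β 3 = (2 * s * (s + 2*n-1) - 2 * 3 * (s^2 + (2*n-1))) / (s + 2*n-1)^2 := by
    rw [gflow, hr]
    field_simp
    ring
  rw [hflow]
  apply div_neg_of_neg_of_pos _ (by positivity)
  nlinarith

lemma gflow_lb {N : ℕ} (hn : (1000000:ℝ) ≤ (N:ℝ)) {α β γ : ℝ}
    (hα1 : α ≤ 3/5) (hβ0 : 0 ≤ β) (hβ1 : β ≤ 9000) (hγ0 : 0 ≤ γ) (hγ1 : γ ≤ 3/5) :
    3 / (40 * (N:ℝ)) < gflow N α β γ := by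
  set n : ℝ := (N : ℝ) with hndef
  obtain ⟨hs1, hs2, -, -⟩ := region_facts hn hα1 hβ0 hβ1
  set s : ℝ := sFun N α β with hsdef
  have hr : rFun N α β = s + 2 * n - 1 := rfl
  have hr0 : 0 < s + 2 * n - 1 := by nlinarith
  have hflow : gflow N α β γ = (2 * s * (s + 2*n-1) - 2 * γ * (s^2 + (2*n-1))) / (s + 2*n-1)^2 := by
    rw [gflow, hr]
    field_simp
    ring
  rw [hflow, div_lt_div_iff₀ (by positivity) (by positivity)]
  have hn0 : (0:ℝ) < n := by linarith
  have hkey : γ*(s^2+(2*n-1)) ≤ (3/5)*(s^2+(2*n-1)) :=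
    mul_le_mul_of_nonneg_right hγ1 (by nlinarith)
  nlinarith [hkey, mul_nonneg (mul_nonneg hn0.le hn0.le) (sub_nonneg.mpr hs1),
    mul_nonneg hn0.le (sub_nonneg.mpr hs1), mul_nonneg hn0.le (sq_nonneg (s-1)),
    sq_nonneg (s-1), hn0]


lemma bflow_nonneg {N : ℕ} (hn : (1000000:ℝ) ≤ (N:ℝ)) {α β γ : ℝ}
    (hα1 : α ≤ 3/5) (hβ0 : 0 ≤ β) (hβ1 : β ≤ 9000) (hγ0 : 0 ≤ γ) (hγ1 : γ ≤ 3) :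
    0 ≤ bflow N α β γ := by
  obtain ⟨hs1, hs2, hu1, hu0⟩ := region_facts hn hα1 hβ0 hβ1
  rw [bflow]
  have hrr : rFun N α β = sFun N α β + 2*(N:ℝ) - 1 := rfl
  rw [hrr]
  set n : ℝ := (N : ℝ) with hndef
  set s : ℝ := sFun N α β with hsdef
  set w : ℝ := Real.exp α / (Real.exp α + 2 * n - 2) with hwdef
  have hr0 : 0 < s + 2 * n - 1 := by nlinarith
  have hQ : 0 ≤ (s + 2*n-1) - γ * (s - 1) := by nlinarith
  apply div_nonneg _ (le_of_lt (pow_pos hr0 3))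
  have h1 : 0 ≤ 2 * s * w * γ * (2*n-1) := by
    have := mul_nonneg (mul_nonneg (mul_nonneg (by nlinarith : (0:ℝ) ≤ 2 * s) hu0.le) hγ0)
      (by nlinarith : (0:ℝ) ≤ 2*n-1)
    linarith [this]
  exact mul_nonneg h1 hQ

lemma bflow_lt {N : ℕ} (hn : (1000000:ℝ) ≤ (N:ℝ)) {α β γ : ℝ}
    (hα1 : α ≤ 3/5) (hβ0 : 0 ≤ β) (hβ1 : β ≤ 9000) (hγ0 : 0 ≤ γ) (hγ1 : γ ≤ 3) :
    bflow N α β γ < 45 / (N:ℝ)^2 := by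
  obtain ⟨hs1, hs2, hu1, hu0⟩ := region_facts hn hα1 hβ0 hβ1
  rw [bflow]
  have hrr : rFun N α β = sFun N α β + 2*(N:ℝ) - 1 := rfl
  rw [hrr]
  set n : ℝ := (N : ℝ) with hndef
  set s : ℝ := sFun N α β with hsdef
  set w : ℝ := Real.exp α / (Real.exp α + 2 * n - 2) with hwdef
  have hn0 : (0:ℝ) < n := by linarith
  have hr0 : 0 < s + 2 * n - 1 := by nlinarith
  set r : ℝ := s + 2 * n - 1 with hrdef
  have hr2n : 2*n - 1 ≤ r := by nlinarith
  have hQ0 : 0 ≤ r - γ * (s - 1) := by nlinarith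
  have hQr : r - γ * (s - 1) ≤ r := by nlinarith
  rw [div_lt_div_iff₀ (by positivity) (by positivity)]
  have hwn : w * n ≤ 1 := by
    calc w * n ≤ (1/n) * n := mul_le_mul_of_nonneg_right hu1 hn0.le
    _ = 1 := by field_simp
  have h1 : (s*γ) * ((2*n-1) * (r - γ*(s-1))) ≤ 6 * (r * r) := by
    apply mul_le_mul (by nlinarith) (mul_le_mul hr2n hQr hQ0 (by nlinarith))
      (mul_nonneg (by nlinarith) hQ0) (by norm_num)
  have h2 : (s*γ) * ((2*n-1) * (r - γ*(s-1))) * (w*n) ≤ 6 * (r*r) := by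
    calc (s*γ) * ((2*n-1) * (r - γ*(s-1))) * (w*n)
        ≤ (s*γ) * ((2*n-1) * (r - γ*(s-1))) * 1 :=
          mul_le_mul_of_nonneg_left hwn
            (mul_nonneg (mul_nonneg (by nlinarith) hγ0) (mul_nonneg (by nlinarith) hQ0))
    _ = (s*γ) * ((2*n-1) * (r - γ*(s-1))) := by ring
    _ ≤ 6 * (r*r) := h1
  have h3 := mul_le_mul_of_nonneg_right h2 hn0.le
  -- 2 * s * w * γ * (2n-1) * (r - γ(s-1)) * n^2 = 2 * [(sγ)((2n-1)Q)(wn)] * n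
  nlinarith [h3, mul_pos (mul_pos hr0 hr0) hr0, mul_pos (mul_pos hr0 hr0) hn0]

lemma bflow_ge {N : ℕ} (hn : (1000000:ℝ) ≤ (N:ℝ)) {α β γ : ℝ}
    (hα0 : 0 ≤ α) (hα1 : α ≤ 3/5) (hβ0 : 0 ≤ β) (hβ1 : β ≤ 9000)
    (hγ0 : 1/2 ≤ γ) (hγ1 : γ ≤ 3) :
    1 / (54 * (N:ℝ)^2) ≤ bflow N α β γ := by
  have hN1 : 1 ≤ N := by
    have h : (1:ℝ) ≤ (N:ℝ) := by linarith
    exact_mod_cast h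
  have hden : 0 < Real.exp α + 2 * (N:ℝ) - 2 := denom_pos hN1 α
  have hE1 : 1 ≤ Real.exp α := Real.one_le_exp hα0
  obtain ⟨hs1, hs2, hu1, hu0⟩ := region_facts hn hα1 hβ0 hβ1
  rw [bflow]
  have hrr : rFun N α β = sFun N α β + 2*(N:ℝ) - 1 := rfl
  rw [hrr]
  set n : ℝ := (N : ℝ) with hndef
  set s : ℝ := sFun N α β with hsdef
  set w : ℝ := Real.exp α / (Real.exp α + 2 * n - 2) with hwdef
  have hn0 : (0:ℝ) < n := by linarith
  have hw2n : 1/(2*n) ≤ w := by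
    rw [hwdef, div_le_div_iff₀ (by linarith) hden]
    nlinarith
  have hr0 : 0 < s + 2 * n - 1 := by nlinarith
  set r : ℝ := s + 2 * n - 1 with hrdef
  have hr3n : r ≤ 3*n := by nlinarith
  have hQn : n ≤ r - γ * (s - 1) := by nlinarith
  rw [div_le_div_iff₀ (by positivity) (by positivity)]
  have hwn : 1/2 ≤ w * n := by
    have h := mul_le_mul_of_nonneg_right hw2n hn0.le
    calc (1:ℝ)/2 = 1/(2*n) * n := by field_simp
    _ ≤ w * n := h
  have hsg : 1/2 ≤ s * γ := by nlinarith
  have f1 : (1/4:ℝ) ≤ s*γ*(w*n) := by nlinarith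
  have f2 : n * n ≤ (2*n-1) * (r - γ*(s-1)) :=
    mul_le_mul (by linarith) hQn hn0.le (by linarith)
  have key : (1/4:ℝ) * (n * n) ≤ (s*γ*(w*n)) * ((2*n-1) * (r - γ*(s-1))) := by
    apply mul_le_mul f1 f2 (by positivity) (by nlinarith)
  have key2 := mul_le_mul_of_nonneg_left key (by linarith : (0:ℝ) ≤ 108 * n)
  have hcube : r^3 ≤ 27 * n^3 := by
    have h := pow_le_pow_left₀ hr0.le hr3n 3
    calc r^3 ≤ (3*n)^3 := h
    _ = 27 * n^3 := by ring
  calc 1 * r^3 = r^3 := by ring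
  _ ≤ 27 * n^3 := hcube
  _ = 108 * n * (1/4 * (n*n)) := by ring
  _ ≤ 108 * n * (s*γ*(w*n) * ((2*n-1) * (r - γ*(s-1)))) := key2
  _ = 2*s*w*γ*(2*n-1)*(r - γ*(s-1))*(54*n^2) := by ring

lemma aflow_eq {N : ℕ} (hN : 1 ≤ N) (α β γ : ℝ) :
    aflow N α β γ = β * bflow N α β γ * ((2*(N:ℝ)-2) / (Real.exp α + 2*(N:ℝ)-2)) := by
  have hden : Real.exp α + 2 * (N:ℝ) - 2 ≠ 0 := ne_of_gt (denom_pos hN α)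
  have hr : (0:ℝ) < rFun N α β := rFun_pos hN α β
  rw [aflow, bflow]
  field_simp


lemma bflow_nonneg_of_nonpos {N : ℕ} (hN1 : 1 ≤ N) {α β γ : ℝ}
    (hβ : β ≤ 0) (hγ : 0 ≤ γ) : 0 ≤ bflow N α β γ := by
  have hden : 0 < Real.exp α + 2 * (N:ℝ) - 2 := denom_pos hN1 α
  have hE0 : 0 < Real.exp α := Real.exp_pos α
  have hu0 : 0 ≤ Real.exp α / (Real.exp α + 2 * (N:ℝ) - 2) := by positivity
  have hs1 : sFun N α β ≤ 1 := by
    rw [sFun, mul_div_assoc]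
    exact Real.exp_le_one_iff.mpr (mul_nonpos_of_nonpos_of_nonneg hβ hu0)
  have hs0 : 0 < sFun N α β := sFun_pos N α β
  have hr0 : 0 < rFun N α β := rFun_pos hN1 α β
  have hn1 : (1:ℝ) ≤ (N:ℝ) := by exact_mod_cast hN1
  have hQ : 0 ≤ rFun N α β - γ * (sFun N α β - 1) := by nlinarith
  rw [bflow]
  apply div_nonneg _ (le_of_lt (pow_pos hr0 3))
  have h1 : 0 ≤ 2 * sFun N α β * (Real.exp α / (Real.exp α + 2 * (N:ℝ) - 2)) * γ *
      (2*(N:ℝ)-1) := by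
    have := mul_nonneg (mul_nonneg (mul_nonneg (by nlinarith : (0:ℝ) ≤ 2 * sFun N α β) hu0) hγ)
      (by nlinarith : (0:ℝ) ≤ 2*(N:ℝ)-1)
    linarith
  exact mul_nonneg h1 hQ

/-- Master invariant lemma on an interval where `A ≤ 3/5`. -/
lemma master {N : ℕ} (hn : (1000000:ℝ) ≤ (N:ℝ)) (A B Γ : ℝ → ℝ)
    (hA0 : A 0 = 0) (hB0 : B 0 = 0) (hΓ0 : Γ 0 = 0)
    (hA : ∀ t : ℝ, 0 ≤ t → HasDerivAt A (aflow N (A t) (B t) (Γ t)) t)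
    (hB : ∀ t : ℝ, 0 ≤ t → HasDerivAt B (bflow N (A t) (B t) (Γ t)) t)
    (hΓ : ∀ t : ℝ, 0 ≤ t → HasDerivAt Γ (gflow N (A t) (B t) (Γ t)) t)
    {T : ℝ} (hT0 : 0 ≤ T) (hT1 : T ≤ 200 * (N:ℝ)^2)
    (hαbd : ∀ t ∈ Icc (0:ℝ) T, A t ≤ 3/5) :
    (∀ t ∈ Icc (0:ℝ) T, 0 ≤ Γ t ∧ Γ t ≤ 3 ∧ 0 ≤ B t ∧ B t ≤ 45 * t / (N:ℝ)^2 ∧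
      0 ≤ A t ∧ A t ≤ (B t)^2/2 ∧ (B t)^2/4 ≤ A t) ∧
    (∀ t ∈ Icc (0:ℝ) T, 8*(N:ℝ)*Real.log 6 ≤ t → 1/2 ≤ Γ t) ∧
    (8*(N:ℝ)*Real.log 6 ≤ T → (T - 8*(N:ℝ)*Real.log 6) / (54*(N:ℝ)^2) ≤ B T) := by
  have hn0 : (0:ℝ) < (N:ℝ) := by linarith
  have hN1 : 1 ≤ N := by
    have h : (1:ℝ) ≤ (N:ℝ) := by linarith
    exact_mod_cast h
  set n : ℝ := (N : ℝ) with hndef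
  -- Step 1 : Γ ≥ 0
  have hΓnn : ∀ t ∈ Icc (0:ℝ) T, 0 ≤ Γ t := by
    have := barrier_pair (f := fun t => -Γ t) (F := fun t => -gflow N (A t) (B t) (Γ t))
      (φ := fun _ => 0) (φ' := fun _ => 0)
      (g := fun _ => (0:ℝ)) (G := fun _ => 0) (ψ := fun _ => 1) (ψ' := fun _ => 0) (T := T)
      (fun t ht => (hΓ t ht.1).neg) (fun t _ => hasDerivAt_const t 0)
      (fun t _ => hasDerivAt_const t 0) (fun t _ => hasDerivAt_const t 1)
      (by simp [hΓ0]) (by norm_num)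
      ?_ (by intro t _ h; norm_num at h)
    · intro t ht
      have h := (this t ht).1
      simpa using h
    · intro t ht hft _
      have hΓt : Γ t = 0 := by simpa using congrArg Neg.neg hft
      rw [hΓt]
      have hpos : 0 < gflow N (A t) (B t) 0 := by
        rw [gflow]
        have h1 : 0 < sFun N (A t) (B t) := sFun_pos N _ _
        have h2 : 0 < rFun N (A t) (B t) := rFun_pos hN1 _ _
        have : 2 * (0:ℝ) * (sFun N (A t) (B t) ^ 2 + (2*n-1)) / (rFun N (A t) (B t))^2 = 0 := by
          ring
        rw [this]
        simpa using div_pos (by linarith) h2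
      linarith
  -- Step 2 : B ≥ 0
  have hBnn : ∀ t ∈ Icc (0:ℝ) T, 0 ≤ B t := by
    have key : ∀ δ : ℝ, 0 < δ → ∀ t ∈ Icc (0:ℝ) T, -B t ≤ δ * (Real.exp t - 1) := by
      intro δ hδ
      have := barrier_pair (f := fun t => -B t) (F := fun t => -bflow N (A t) (B t) (Γ t))
        (φ := fun t => δ * (Real.exp t - 1)) (φ' := fun t => δ * Real.exp t)
        (g := fun _ => (0:ℝ)) (G := fun _ => 0) (ψ := fun _ => 1) (ψ' := fun _ => 0) (T := T)
        (fun t ht => (hB t ht.1).neg)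
        (fun t _ => hasDerivAt_const t 0)
        (fun t _ => by simpa using ((Real.hasDerivAt_exp t).sub_const 1).const_mul δ)
        (fun t _ => hasDerivAt_const t 1)
        (by simp [hB0]) (by norm_num)
        ?_ (by intro t _ h; norm_num at h)
      · intro t ht
        have h := (this t ht).1
        simpa using h
      · intro t ht hft _
        have hexp1 : (1:ℝ) ≤ Real.exp t := Real.one_le_exp ht.1
        have hBt : B t ≤ 0 := by
          have : -B t = δ * (Real.exp t - 1) := hft
          nlinarith
        have hbf := bflow_nonneg_of_nonpos (α := A t) hN1 hBt (hΓnn t ht)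
        have : 0 < δ * Real.exp t := by positivity
        linarith
    intro t ht
    by_contra hneg
    push_neg at hneg
    have hexp0 : (0:ℝ) < Real.exp t := Real.exp_pos t
    have hd := key ((-B t) / (2 * Real.exp t)) (div_pos (by linarith) (by positivity)) t ht
    have hexp1 : (1:ℝ) ≤ Real.exp t := Real.one_le_exp ht.1
    rw [div_mul_eq_mul_div, le_div_iff₀ (by positivity)] at hd
    nlinarith
  -- Step 3 : compound barrier Γ ≤ 3 and B ≤ 45 t / n²
  have hcomp : ∀ t ∈ Icc (0:ℝ) T, Γ t ≤ 3 ∧ B t ≤ 45 * t / n^2 := by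
    have hψd : ∀ t ∈ Icc (0:ℝ) T, HasDerivAt (fun t => 45 * t / n^2) (45 / n^2) t := by
      intro t _
      have := ((hasDerivAt_id t).const_mul (45:ℝ)).div_const (n^2)
      simpa using this
    apply barrier_pair (f := Γ) (F := fun t => gflow N (A t) (B t) (Γ t))
      (φ := fun _ => 3) (φ' := fun _ => 0)
      (g := B) (G := fun t => bflow N (A t) (B t) (Γ t))
      (ψ := fun t => 45 * t / n^2) (ψ' := fun _ => 45 / n^2)
      (fun t ht => hΓ t ht.1) (fun t ht => hB t ht.1)
      (fun t _ => hasDerivAt_const t 3) hψd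
      (by simp [hΓ0]) (by simp [hB0])
    · intro t ht hΓt hBt
      have hBb : B t ≤ 9000 := by
        have h1 : 45 * t / n^2 ≤ 9000 := by
          rw [div_le_iff₀ (by positivity)]
          nlinarith [ht.2]
        linarith
      have hΓt' : Γ t = 3 := hΓt
      show gflow N (A t) (B t) (Γ t) < 0
      rw [hΓt']
      exact gflow_at_three hn (hαbd t ht) (hBnn t ht) hBb
    · intro t ht hBt hΓt
      have hBb : B t ≤ 9000 := by
        have h1 : 45 * t / n^2 ≤ 9000 := by
          rw [div_le_iff₀ (by positivity)]
          nlinarith [ht.2]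
        linarith
      exact bflow_lt hn (hαbd t ht) (hBnn t ht) hBb (hΓnn t ht) hΓt
  have hB9000 : ∀ t ∈ Icc (0:ℝ) T, B t ≤ 9000 := by
    intro t ht
    have h1 : 45 * t / n^2 ≤ 9000 := by
      rw [div_le_iff₀ (by positivity)]
      nlinarith [ht.2]
    linarith [(hcomp t ht).2]
  -- pointwise nonnegativity of bflow and the ratio factor
  have hbfnn : ∀ t ∈ Icc (0:ℝ) T, 0 ≤ bflow N (A t) (B t) (Γ t) := fun t ht =>
    bflow_nonneg hn (hαbd t ht) (hBnn t ht) (hB9000 t ht) (hΓnn t ht) (hcomp t ht).1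
  have hkfacts : ∀ t ∈ Icc (0:ℝ) T,
      0 ≤ (2*n-2) / (Real.exp (A t) + 2*n-2) ∧
      (2*n-2) / (Real.exp (A t) + 2*n-2) ≤ 1 ∧
      1/2 ≤ (2*n-2) / (Real.exp (A t) + 2*n-2) := by
    intro t ht
    have hE0 : 0 < Real.exp (A t) := Real.exp_pos _
    have hE2 : Real.exp (A t) ≤ 2 := exp_le_two_of_le (by linarith [hαbd t ht])
    have hden : 0 < Real.exp (A t) + 2*n-2 := by nlinarith
    refine ⟨div_nonneg (by nlinarith) hden.le, ?_, ?_⟩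
    · rw [div_le_one hden]; nlinarith
    · rw [div_le_div_iff₀ (by norm_num) hden]; nlinarith
  have haflow : ∀ t ∈ Icc (0:ℝ) T, aflow N (A t) (B t) (Γ t) =
      B t * bflow N (A t) (B t) (Γ t) * ((2*n-2) / (Real.exp (A t) + 2*n-2)) := fun t _ =>
    aflow_eq hN1 (A t) (B t) (Γ t)
  have hafnn : ∀ t ∈ Icc (0:ℝ) T, 0 ≤ aflow N (A t) (B t) (Γ t) := by
    intro t ht
    rw [haflow t ht]
    exact mul_nonneg (mul_nonneg (hBnn t ht) (hbfnn t ht)) (hkfacts t ht).1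
  -- Step 4 : A is nonnegative
  have hAnn : ∀ t ∈ Icc (0:ℝ) T, 0 ≤ A t := by
    intro t ht
    have hmono := monoOn_of_hasDerivAt (f := A) (F := fun t => aflow N (A t) (B t) (Γ t))
      (a := 0) (b := T) (fun u hu => hA u hu.1) hafnn
    have := hmono (left_mem_Icc.mpr hT0) ht ht.1
    rwa [hA0] at this
  -- Step 5 : A ≤ B² / 2
  have hAB2 : ∀ t ∈ Icc (0:ℝ) T, A t ≤ (B t)^2/2 := by
    intro t ht
    have hmono := monoOn_of_hasDerivAt (f := fun u => (B u)^2/2 - A u)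
      (F := fun u => B u * bflow N (A u) (B u) (Γ u) - aflow N (A u) (B u) (Γ u))
      (a := 0) (b := T)
      (fun u hu => ((((hB u hu.1).pow 2).div_const 2).congr_deriv (by ring)).sub (hA u hu.1))
      ?_
    · have h := hmono (left_mem_Icc.mpr hT0) ht ht.1
      simp only [hA0, hB0] at h
      norm_num at h
      linarith
    · intro u hu
      show 0 ≤ B u * bflow N (A u) (B u) (Γ u) - aflow N (A u) (B u) (Γ u)
      rw [haflow u hu]
      have h1 := mul_nonneg (hBnn u hu) (hbfnn u hu)
      have h2 := (hkfacts u hu).2.1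
      nlinarith [mul_nonneg h1 (sub_nonneg.mpr h2)]
  -- Step 6 : A ≥ B² / 4
  have hAB4 : ∀ t ∈ Icc (0:ℝ) T, (B t)^2/4 ≤ A t := by
    intro t ht
    have hmono := monoOn_of_hasDerivAt (f := fun u => A u - (B u)^2/4)
      (F := fun u => aflow N (A u) (B u) (Γ u) - B u * bflow N (A u) (B u) (Γ u) / 2)
      (a := 0) (b := T)
      (fun u hu => (hA u hu.1).sub ((((hB u hu.1).pow 2).div_const 4).congr_deriv (by ring)))
      ?_
    · have h := hmono (left_mem_Icc.mpr hT0) ht ht.1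
      simp only [hA0, hB0] at h
      norm_num at h
      linarith
    · intro u hu
      show 0 ≤ aflow N (A u) (B u) (Γ u) - B u * bflow N (A u) (B u) (Γ u) / 2
      rw [haflow u hu]
      have h1 := mul_nonneg (hBnn u hu) (hbfnn u hu)
      have h2 := (hkfacts u hu).2.2
      nlinarith [mul_nonneg h1 (sub_nonneg.mpr h2)]
  -- Step 7 : lower moving barrier for Γ
  have hγlow : ∀ t ∈ Icc (0:ℝ) T, 3/5 - (3/5)*Real.exp (t * (-1/(8*n))) ≤ Γ t := by
    have hbar := barrier_pair
      (f := fun t => 3/5 - (3/5)*Real.exp (t * (-1/(8*n))) - Γ t)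
      (F := fun t => -(3/5)*(Real.exp (t * (-1/(8*n))) * (-1/(8*n))) -
        gflow N (A t) (B t) (Γ t))
      (φ := fun _ => 0) (φ' := fun _ => 0)
      (g := fun _ => (0:ℝ)) (G := fun _ => 0) (ψ := fun _ => 1) (ψ' := fun _ => 0) (T := T)
      (fun t ht => (((((hasDerivAt_id t).mul_const (-1/(8*n))).exp.const_mul
        ((3:ℝ)/5)).const_sub (3/5)).sub (hΓ t ht.1)).congr_deriv (by simp))
      (fun t _ => hasDerivAt_const t 0)
      (fun t _ => hasDerivAt_const t 0) (fun t _ => hasDerivAt_const t 1)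
      (by simp [hΓ0]) (by norm_num)
      ?_ (by intro t _ h; norm_num at h)
    · intro t ht
      have h := (hbar t ht).1
      linarith
    · intro t ht hft _
      have hft' : 3/5 - (3/5)*Real.exp (t * (-1/(8*n))) - Γ t = 0 := hft
      have hex0 : 0 < Real.exp (t * (-1/(8*n))) := Real.exp_pos _
      have hex1 : Real.exp (t * (-1/(8*n))) ≤ 1 := by
        rw [Real.exp_le_one_iff]
        have : -1/(8*n) ≤ 0 := by
          apply div_nonpos_of_nonpos_of_nonneg <;> nlinarith
        nlinarith [ht.1]
      have hγ0' : 0 ≤ Γ t := hΓnn t ht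
      have hγ1' : Γ t ≤ 3/5 := by nlinarith
      have hgl := gflow_lb hn (hαbd t ht) (hBnn t ht) (hB9000 t ht) hγ0' hγ1'
      show -(3/5)*(Real.exp (t * (-1/(8*n))) * (-1/(8*n))) - gflow N (A t) (B t) (Γ t) < 0
      have heq : -(3/5:ℝ)*(Real.exp (t * (-1/(8*n))) * (-1/(8*n))) =
          3*Real.exp (t * (-1/(8*n)))/(40*n) := by
        field_simp
        ring
      rw [heq]
      have h5 : 3*Real.exp (t * (-1/(8*n)))/(40*n) ≤ 3/(40*n) := by
        apply div_le_div_of_nonneg_right _ (by nlinarith)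
        · nlinarith
      linarith
  have hγhalf : ∀ t ∈ Icc (0:ℝ) T, 8*n*Real.log 6 ≤ t → 1/2 ≤ Γ t := by
    intro t ht hTγ
    have hlog6 : 0 < Real.log 6 := Real.log_pos (by norm_num)
    have hc0 : (-1/(8*n) : ℝ) ≤ 0 := by
      apply div_nonpos_of_nonpos_of_nonneg <;> nlinarith
    have h1 : t * (-1/(8*n)) ≤ (8*n*Real.log 6) * (-1/(8*n)) :=
      mul_le_mul_of_nonpos_right hTγ hc0
    have h2 : (8*n*Real.log 6) * (-1/(8*n)) = -Real.log 6 := by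
      field_simp
    have h3 : Real.exp (t * (-1/(8*n))) ≤ 1/6 := by
      rw [h2] at h1
      calc Real.exp (t * (-1/(8*n))) ≤ Real.exp (-Real.log 6) := Real.exp_le_exp.mpr h1
      _ = 1/6 := by
          rw [Real.exp_neg, Real.exp_log (by norm_num : (0:ℝ) < 6)]
          norm_num
    have := hγlow t ht
    nlinarith
  refine ⟨fun t ht => ⟨hΓnn t ht, (hcomp t ht).1, hBnn t ht, (hcomp t ht).2, hAnn t ht,
    hAB2 t ht, hAB4 t ht⟩, hγhalf, ?_⟩
  -- Step 8 : growth of B after time 8 n log 6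
  intro hTγT
  have hlog6 : 0 < Real.log 6 := Real.log_pos (by norm_num)
  have hTγ0 : 0 ≤ 8*n*Real.log 6 := by positivity
  have hgrow := growth_of_hasDerivAt (f := B)
    (F := fun t => bflow N (A t) (B t) (Γ t))
    (a := 8*n*Real.log 6) (b := T) (m := 1/(54*n^2)) hTγT
    (fun t ht' => hB t (le_trans hTγ0 ht'.1)) ?_
  · have hBTγ : 0 ≤ B (8*n*Real.log 6) := hBnn _ ⟨hTγ0, hTγT⟩
    have heq : 1/(54*n^2) * (T - 8*n*Real.log 6) = (T - 8*n*Real.log 6)/(54*n^2) := by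
      ring
    linarith [hgrow, heq ▸ hgrow]
  · intro t ht'
    have htIcc : t ∈ Icc (0:ℝ) T := ⟨le_trans hTγ0 ht'.1, ht'.2⟩
    exact bflow_ge hn (hAnn t htIcc) (hαbd t htIcc) (hBnn t htIcc) (hB9000 t htIcc)
      (hγhalf t htIcc ht'.1) (hcomp t htIcc).1



/-- For all sufficiently large `N` and every gradient-flow solution `(α, β, γ)` of `L_N`
with zero initialization, the time until in-context learning
`t_ICL = inf{t ≥ 0 : α(t) ≥ 1/2, β(t) ≥ 1/2, γ(t) ≥ 1/2}` is finite (the set is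
nonempty) and satisfies `c·N² ≤ t_ICL ≤ C·N²`; that is, `t_ICL = Θ(N²)`. -/
theorem stmt19 :
    ∃ c C : ℝ, 0 < c ∧ 0 < C ∧ ∃ N₀ : ℕ, ∀ N : ℕ, N₀ ≤ N →
      ∀ A B Γ : ℝ → ℝ,
        A 0 = 0 → B 0 = 0 → Γ 0 = 0 →
        (∀ t : ℝ, 0 ≤ t → HasDerivAt A (-dLalpha N (A t) (B t) (Γ t)) t) →
        (∀ t : ℝ, 0 ≤ t → HasDerivAt B (-dLbeta N (A t) (B t) (Γ t)) t) →
        (∀ t : ℝ, 0 ≤ t → HasDerivAt Γ (-dLgamma N (A t) (B t) (Γ t)) t) →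
        {t : ℝ | 0 ≤ t ∧ 1 / 2 ≤ A t ∧ 1 / 2 ≤ B t ∧ 1 / 2 ≤ Γ t}.Nonempty ∧
        c * (N : ℝ) ^ 2 ≤
            sInf {t : ℝ | 0 ≤ t ∧ 1 / 2 ≤ A t ∧ 1 / 2 ≤ B t ∧ 1 / 2 ≤ Γ t} ∧
        sInf {t : ℝ | 0 ≤ t ∧ 1 / 2 ≤ A t ∧ 1 / 2 ≤ B t ∧ 1 / 2 ≤ Γ t} ≤
            C * (N : ℝ) ^ 2 := by
  refine ⟨1/90, 200, by norm_num, by norm_num, 1000000, ?_⟩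
  intro N hNnat A B Γ hA0 hB0 hΓ0 hAd hBd hΓd
  have hn : (1000000:ℝ) ≤ (N:ℝ) := by exact_mod_cast hNnat
  set n : ℝ := (N:ℝ) with hndef
  have hn0 : (0:ℝ) < n := by linarith
  have hN1 : 1 ≤ N := le_trans (by norm_num) hNnat
  have hA : ∀ t : ℝ, 0 ≤ t → HasDerivAt A (aflow N (A t) (B t) (Γ t)) t :=
    fun t ht => (hAd t ht).congr_deriv (neg_dLalpha_eq hN1 _ _ _)
  have hB : ∀ t : ℝ, 0 ≤ t → HasDerivAt B (bflow N (A t) (B t) (Γ t)) t :=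
    fun t ht => (hBd t ht).congr_deriv (neg_dLbeta_eq hN1 _ _ _)
  have hΓ : ∀ t : ℝ, 0 ≤ t → HasDerivAt Γ (gflow N (A t) (B t) (Γ t)) t :=
    fun t ht => (hΓd t ht).congr_deriv (neg_dLgamma_eq N _ _ _)
  have hlog6 : 0 < Real.log 6 := Real.log_pos (by norm_num)
  have hlog6two : Real.log 6 < 2 := by
    rw [Real.log_lt_iff_lt_exp (by norm_num)]
    have h1 := Real.exp_one_gt_d9
    have h2 : Real.exp 2 = Real.exp 1 * Real.exp 1 := by
      rw [← Real.exp_add]; norm_num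
    nlinarith
  set T₁ : ℝ := 200 * n^2 with hT₁def
  have hT₁0 : 0 ≤ T₁ := by positivity
  set ICL := {t : ℝ | 0 ≤ t ∧ 1 / 2 ≤ A t ∧ 1 / 2 ≤ B t ∧ 1 / 2 ≤ Γ t} with hICL
  have hICLbdd : BddBelow ICL := ⟨0, fun x hx => hx.1⟩
  set S := {t : ℝ | t ∈ Icc (0:ℝ) T₁ ∧ 3/5 ≤ A t} with hSdef
  by_cases hS : S.Nonempty
  · -- Case 1 : A reaches 3/5 before time T₁
    have hScl : IsClosed S := by
      have hcont : ContinuousOn A (Icc (0:ℝ) T₁) :=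
        fun t ht => (hA t ht.1).continuousAt.continuousWithinAt
      have : S = Icc (0:ℝ) T₁ ∩ A ⁻¹' Ici (3/5) := by
        ext t; exact Iff.rfl
      rw [this]
      exact ContinuousOn.preimage_isClosed_of_isClosed hcont isClosed_Icc isClosed_Ici
    have hSbdd : BddBelow S := ⟨0, fun t ht => ht.1.1⟩
    set τ := sInf S with hτdef
    have hτS : τ ∈ S := hScl.csInf_mem hS hSbdd
    have hτIcc : τ ∈ Icc (0:ℝ) T₁ := hτS.1
    have hτA : 3/5 ≤ A τ := hτS.2
    have hτpos : 0 < τ := by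
      rcases eq_or_lt_of_le hτIcc.1 with h | h
      · exfalso
        have : A 0 = A τ := by rw [← h]
        rw [hA0] at this
        linarith
      · exact h
    have hless : ∀ t ∈ Icc (0:ℝ) T₁, t < τ → A t < 3/5 := by
      intro t ht htτ
      by_contra h
      push_neg at h
      exact absurd (csInf_le hSbdd ⟨ht, h⟩) (not_le.mpr htτ)
    have hαbd : ∀ t ∈ Icc (0:ℝ) τ, A t ≤ 3/5 := by
      intro t ht
      rcases lt_or_eq_of_le ht.2 with h | h
      · exact (hless t ⟨ht.1, le_trans ht.2 hτIcc.2⟩ h).le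
      · rw [h]
        have htd : Tendsto A (𝓝[<] τ) (𝓝 (A τ)) :=
          (hA τ hτIcc.1).continuousAt.continuousWithinAt
        apply le_of_tendsto htd
        have hIoo : Ioo (0:ℝ) τ ∈ 𝓝[<] τ := Ioo_mem_nhdsLT_of_mem ⟨hτpos, le_refl τ⟩
        filter_upwards [hIoo] with u hu
        exact (hless u ⟨hu.1.le, le_trans hu.2.le hτIcc.2⟩ hu.2).le
    obtain ⟨hinv, hγh, -⟩ := master hn A B Γ hA0 hB0 hΓ0 hA hB hΓ hτIcc.1
      (le_trans hτIcc.2 (le_refl T₁)) hαbd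
    have hτmem : τ ∈ Icc (0:ℝ) τ := right_mem_Icc.mpr hτIcc.1
    obtain ⟨-, -, hBτ0, hBτub, -, hAub, -⟩ := hinv τ hτmem
    have hBτ1 : 1 ≤ B τ := by nlinarith
    have hτlb : n^2/45 ≤ τ := by
      have h45 : 1 ≤ 45 * τ / n^2 := le_trans hBτ1 hBτub
      rw [le_div_iff₀ (by positivity)] at h45
      rw [div_le_iff₀ (by norm_num : (0:ℝ) < 45)]
      linarith
    have hτγ : 8*n*Real.log 6 ≤ τ := by
      have h16 : 8*n*Real.log 6 ≤ 16*n := by nlinarith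
      have : 16*n ≤ n^2/45 := by
        rw [le_div_iff₀ (by norm_num : (0:ℝ) < 45)]
        nlinarith
      linarith
    have hΓτ : 1/2 ≤ Γ τ := hγh τ hτmem hτγ
    have hτICL : τ ∈ ICL := ⟨hτIcc.1, by linarith, by linarith, hΓτ⟩
    refine ⟨⟨τ, hτICL⟩, ?_, ?_⟩
    · apply le_csInf ⟨τ, hτICL⟩
      intro x hx
      obtain ⟨hx0, hxA, hxB, hxΓ⟩ := hx
      rcases le_or_gt x τ with hxτ | hxτ
      · obtain ⟨-, -, -, hxub, -, -, -⟩ := hinv x ⟨hx0, hxτ⟩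
        have : n^2 ≤ 90 * x := by
          have h1 : 1/2 ≤ 45 * x / n^2 := le_trans hxB hxub
          rw [le_div_iff₀ (by positivity)] at h1
          linarith
        linarith
      · have : n^2/90 ≤ x := by
          have : n^2/90 ≤ n^2/45 := by
            apply div_le_div_of_nonneg_left (by positivity) (by norm_num) (by norm_num)
          linarith
        linarith
    · calc sInf ICL ≤ τ := csInf_le hICLbdd hτICL
      _ ≤ T₁ := hτIcc.2
      _ = 200 * n^2 := rfl
  · -- Case 2 : A stays below 3/5 on [0, T₁]; impossible
    exfalso
    have hαbd : ∀ t ∈ Icc (0:ℝ) T₁, A t ≤ 3/5 := by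
      intro t ht
      by_contra h
      push_neg at h
      exact hS ⟨t, ht, h.le⟩
    obtain ⟨hinv, -, hgrow⟩ := master hn A B Γ hA0 hB0 hΓ0 hA hB hΓ hT₁0 (le_refl T₁) hαbd
    have hγT : 8*n*Real.log 6 ≤ T₁ := by nlinarith
    have hgr := hgrow hγT
    have hBT : 2 ≤ B T₁ := by
      have h2 : 2 ≤ (T₁ - 8*n*Real.log 6) / (54*n^2) := by
        rw [le_div_iff₀ (by positivity)]
        nlinarith
      linarith
    have hT₁mem : T₁ ∈ Icc (0:ℝ) T₁ := right_mem_Icc.mpr hT₁0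
    obtain ⟨-, -, -, -, -, -, hAlb⟩ := hinv T₁ hT₁mem
    have := hαbd T₁ hT₁mem
    nlinarith


end
end
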